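/- In the two-alien case (c_B = c_A, c_C = c_D), the symmetric-in-pairs profile with x_A = x_B = (2b c_D - b c_A - 3 c_A - a b + 3 a)/(2(3-b)(b+1)) and x_C = x_D = (3a - b c_D - 3 c_D + 2b c_A - a b)/(2(3-b)(b+1)) satisfies the Cournot first-order conditions ∂φ_i/∂x_i = 0 for all four firms. -/
import Mathlib

private lemma deriv_quad (q r y : ℝ) :
    deriv (fun x : ℝ => -x^2 + (q*x + r)) y = -(2*y) + q := by
  have h1 : HasDerivAt (fun x : ℝ => x^2) (2*y) y := by
    simpa using hasDerivAt_pow 2 y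
  have h2 : HasDerivAt (fun x : ℝ => q*x + r) q y := by
    simpa using ((hasDerivAt_id y).const_mul q).add_const r
  exact (h1.neg.add h2).deriv


/-- Inverse demand price of firm A. -/
noncomputable def pA (a b xA xB xC xD : ℝ) : ℝ := a - xA - b*(xB + xC + xD)
noncomputable def pB (a b xA xB xC xD : ℝ) : ℝ := a - xB - b*(xA + xC + xD)
noncomputable def pC (a b xA xB xC xD : ℝ) : ℝ := a - xC - b*(xA + xB + xD)
noncomputable def pD (a b xA xB xC xD : ℝ) : ℝ := a - xD - b*(xA + xB + xC)

/-- Absolute profits. -/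
noncomputable def piA (a b cA xA xB xC xD : ℝ) : ℝ := (pA a b xA xB xC xD - cA) * xA
noncomputable def piB (a b cB xA xB xC xD : ℝ) : ℝ := (pB a b xA xB xC xD - cB) * xB
noncomputable def piC (a b cC xA xB xC xD : ℝ) : ℝ := (pC a b xA xB xC xD - cC) * xC
noncomputable def piD (a b cD xA xB xC xD : ℝ) : ℝ := (pD a b xA xB xC xD - cD) * xD

/-- Relative profits. -/
noncomputable def phiA (a b cA cB cC cD xA xB xC xD : ℝ) : ℝ :=
  piA a b cA xA xB xC xD - (piB a b cB xA xB xC xD + piC a b cC xA xB xC xD + piD a b cD xA xB xC xD)/3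
noncomputable def phiB (a b cA cB cC cD xA xB xC xD : ℝ) : ℝ :=
  piB a b cB xA xB xC xD - (piA a b cA xA xB xC xD + piC a b cC xA xB xC xD + piD a b cD xA xB xC xD)/3
noncomputable def phiC (a b cA cB cC cD xA xB xC xD : ℝ) : ℝ :=
  piC a b cC xA xB xC xD - (piA a b cA xA xB xC xD + piB a b cB xA xB xC xD + piD a b cD xA xB xC xD)/3
noncomputable def phiD (a b cA cB cC cD xA xB xC xD : ℝ) : ℝ :=
  piD a b cD xA xB xC xD - (piA a b cA xA xB xC xD + piB a b cB xA xB xC xD + piC a b cC xA xB xC xD)/3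

/-- Two-alien case (`c_B = c_A`, `c_C = c_D`): the pairwise-symmetric profile
satisfies all four Cournot first-order conditions. -/
theorem two_alien_profile_satisfies_FOC (a b cA cB cC cD : ℝ)
    (hb0 : 0 < b) (hb1 : b < 1) (hcB : cB = cA) (hcC : cC = cD) :
    let x1 := (2*b*cD - b*cA - 3*cA - a*b + 3*a) / (2*(3 - b)*(b + 1))
    let x2 := (3*a - b*cD - 3*cD + 2*b*cA - a*b) / (2*(3 - b)*(b + 1))
    deriv (fun x => phiA a b cA cB cC cD x x1 x2 x2) x1 = 0 ∧
    deriv (fun x => phiB a b cA cB cC cD x1 x x2 x2) x1 = 0 ∧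
    deriv (fun x => phiC a b cA cB cC cD x1 x1 x x2) x2 = 0 ∧
    deriv (fun x => phiD a b cA cB cC cD x1 x1 x2 x) x2 = 0 := by
  subst cB cC
  intro x1 x2
  have h3b : (3 : ℝ) - b ≠ 0 := by linarith
  have hb1' : (b : ℝ) + 1 ≠ 0 := by linarith
  have hx1 : x1 = (2*b*cD - b*cA - 3*cA - a*b + 3*a) / (2*(3 - b)*(b + 1)) := rfl
  have hx2 : x2 = (3*a - b*cD - 3*cD + 2*b*cA - a*b) / (2*(3 - b)*(b + 1)) := rfl
  have hA : -(2*x1) + (a - cA - 2*b*(x1 + 2*x2)/3) = 0 := by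
    rw [hx1, hx2]; field_simp; ring
  have hC : -(2*x2) + (a - cD - 2*b*(2*x1 + x2)/3) = 0 := by
    rw [hx1, hx2]; field_simp; ring
  refine ⟨?_, ?_, ?_, ?_⟩
  · have e : (fun x => phiA a b cA cA cD cD x x1 x2 x2)
        = (fun x => -x^2 + ((a - cA - 2*b*(x1 + 2*x2)/3)*x
            + phiA a b cA cA cD cD 0 x1 x2 x2)) := by
      funext x
      simp only [phiA, piA, piB, piC, piD, pA, pB, pC, pD]; ring
    rw [e, deriv_quad]; linarith [hA]
  · have e : (fun x => phiB a b cA cA cD cD x1 x x2 x2)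
        = (fun x => -x^2 + ((a - cA - 2*b*(x1 + 2*x2)/3)*x
            + phiB a b cA cA cD cD x1 0 x2 x2)) := by
      funext x
      simp only [phiB, piA, piB, piC, piD, pA, pB, pC, pD]; ring
    rw [e, deriv_quad]; linarith [hA]
  · have e : (fun x => phiC a b cA cA cD cD x1 x1 x x2)
        = (fun x => -x^2 + ((a - cD - 2*b*(2*x1 + x2)/3)*x
            + phiC a b cA cA cD cD x1 x1 0 x2)) := by
      funext x
      simp only [phiC, piA, piB, piC, piD, pA, pB, pC, pD]; ring
    rw [e, deriv_quad]; linarith [hC]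
  · have e : (fun x => phiD a b cA cA cD cD x1 x1 x2 x)
        = (fun x => -x^2 + ((a - cD - 2*b*(2*x1 + x2)/3)*x
            + phiD a b cA cA cD cD x1 x1 x2 0)) := by
      funext x
      simp only [phiD, piA, piB, piC, piD, pA, pB, pC, pD]; ring
    rw [e, deriv_quad]; linarith [hC]
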